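/- Let k be a field, V a k-vector space with an anisotropic quadratic form q over k, and consider the quadratic form q ⊥ ⟨t⟩ on V ⊕ k over the field of formal Laurent series k((t)) (extending q by scalars and adding the rank-one form x ↦ t·x²). Then q ⊥ ⟨t⟩ is anisotropic over k((t)). -/

import Mathlib

open scoped TensorProduct

/-!
Write `x = ∑ cᵢ ⊗ eᵢ` in a basis `(eᵢ)` of `V` and let `d` be the least order of the `cᵢ`.
Then `q(x)` has no terms below `t^(2d)`, and its `t^(2d)`-coefficient is `q(w)` for the leading
vector `w = ∑ (cᵢ)_d • eᵢ`, which is nonzero by linear independence. By anisotropy of `q`, the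
series `q(x)` therefore has exact, even, order `2d`, whereas `t·a²` has odd order. So
`q(x) + t·a² = 0` forces `x = 0`, and then `a = 0`.
-/

namespace HahnSeries

variable {Γ R : Type*} [AddCommMonoid Γ] [LinearOrder Γ] [IsOrderedCancelAddMonoid Γ]

section Multiplication

variable [NonUnitalNonAssocSemiring R] {f g : HahnSeries Γ R} {d e : Γ}

theorem coeff_mul_eq_zero_of_lt_add (hf : ↑d ≤ f.orderTop) (hg : ↑e ≤ g.orderTop) {n : Γ}
    (hn : n < d + e) : (f * g).coeff n = 0 :=
  coeff_eq_zero_of_lt_orderTop <| calc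
    (n : WithTop Γ) < ↑d + ↑e := by exact_mod_cast hn
    _ ≤ f.orderTop + g.orderTop := add_le_add hf hg
    _ ≤ (f * g).orderTop := orderTop_add_le_mul

theorem coeff_mul_add_of_le_orderTop (hf : ↑d ≤ f.orderTop) (hg : ↑e ≤ g.orderTop) :
    (f * g).coeff (d + e) = f.coeff d * g.coeff e := by
  rcases hf.lt_or_eq with hf' | hf'
  · rw [coeff_eq_zero_of_lt_orderTop hf', zero_mul]
    exact coeff_eq_zero_of_lt_orderTop <|
      (WithTop.add_lt_add_of_lt_of_le WithTop.coe_ne_top hf' hg).trans_le orderTop_add_le_mul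
  rcases hg.lt_or_eq with hg' | hg'
  · rw [coeff_eq_zero_of_lt_orderTop hg', mul_zero]
    exact coeff_eq_zero_of_lt_orderTop <|
      (WithTop.add_lt_add_of_le_of_lt WithTop.coe_ne_top hf hg').trans_le orderTop_add_le_mul
  have hf0 : f ≠ 0 := orderTop_ne_top.mp (hf' ▸ WithTop.coe_ne_top)
  have hg0 : g ≠ 0 := orderTop_ne_top.mp (hg' ▸ WithTop.coe_ne_top)
  have hfd : f.order = d := by exact_mod_cast (order_eq_orderTop_of_ne_zero hf0).trans hf'.symm
  have hge : g.order = e := by exact_mod_cast (order_eq_orderTop_of_ne_zero hg0).trans hg'.symm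
  rw [← hfd, ← hge, coeff_mul_order_add_order, leadingCoeff_eq, leadingCoeff_eq]

end Multiplication

theorem orderTop_single_one_mul_mul_self_ne {R : Type*} [Semiring R] [NoZeroDivisors R] {r : R}
    (hr : r ≠ 0) (a : HahnSeries ℤ R) (d : ℤ) : (single 1 r * (a * a)).orderTop ≠ ↑(d + d) := by
  rcases eq_or_ne a 0 with rfl | ha
  · simp only [mul_zero, orderTop_zero, ne_eq, WithTop.top_ne_coe, not_false_eq_true]
  rw [orderTop_mul, orderTop_mul, orderTop_single hr, ← order_eq_orderTop_of_ne_zero ha]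
  norm_cast
  omega

end HahnSeries

theorem LinearMap.BilinForm.baseChange_sum_tmul_sum_tmul {R A V ι κ : Type*} [CommSemiring R]
    [CommSemiring A] [Algebra R A] [AddCommMonoid V] [Module R V] (b : LinearMap.BilinForm R V)
    (s : Finset ι) (t : Finset κ) (f : ι → A) (g : κ → A) (v : ι → V) (w : κ → V) :
    b.baseChange A (∑ i ∈ s, f i ⊗ₜ v i) (∑ j ∈ t, g j ⊗ₜ w j) =
      ∑ i ∈ s, ∑ j ∈ t, b (v i) (w j) • (f i * g j) := by
  simp only [map_sum, LinearMap.sum_apply, LinearMap.BilinForm.baseChange_tmul]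
  exact Finset.sum_comm

namespace HahnSeries

variable {Γ R V ι κ : Type*} [AddCommMonoid Γ] [LinearOrder Γ] [IsOrderedCancelAddMonoid Γ]
  [CommSemiring R] [AddCommMonoid V] [Module R V] (b : LinearMap.BilinForm R V)
  {s : Finset ι} {t : Finset κ} {f : ι → HahnSeries Γ R} {g : κ → HahnSeries Γ R}
  (v : ι → V) (w : κ → V) {d e : Γ}

theorem le_orderTop_baseChange_sum_tmul (hf : ∀ i ∈ s, ↑d ≤ (f i).orderTop)
    (hg : ∀ j ∈ t, ↑e ≤ (g j).orderTop) :
    ↑(d + e) ≤ (b.baseChange (HahnSeries Γ R) (∑ i ∈ s, f i ⊗ₜ v i)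
      (∑ j ∈ t, g j ⊗ₜ w j)).orderTop := by
  refine le_orderTop_iff_forall.mpr fun n hn => ?_
  rw [LinearMap.BilinForm.baseChange_sum_tmul_sum_tmul]
  simp only [coeff_sum, coeff_smul]
  refine Finset.sum_eq_zero fun i hi => Finset.sum_eq_zero fun j hj => ?_
  rw [coeff_mul_eq_zero_of_lt_add (hf i hi) (hg j hj) (by exact_mod_cast hn), smul_zero]

theorem coeff_baseChange_sum_tmul (hf : ∀ i ∈ s, ↑d ≤ (f i).orderTop)
    (hg : ∀ j ∈ t, ↑e ≤ (g j).orderTop) :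
    (b.baseChange (HahnSeries Γ R) (∑ i ∈ s, f i ⊗ₜ v i) (∑ j ∈ t, g j ⊗ₜ w j)).coeff (d + e) =
      b (∑ i ∈ s, (f i).coeff d • v i) (∑ j ∈ t, (g j).coeff e • w j) := by
  rw [LinearMap.BilinForm.baseChange_sum_tmul_sum_tmul]
  simp only [coeff_sum, coeff_smul, map_sum, LinearMap.sum_apply, map_smul,
    LinearMap.smul_apply, smul_eq_mul, Finset.mul_sum]
  rw [Finset.sum_comm]
  refine Finset.sum_congr rfl fun j hj => Finset.sum_congr rfl fun i hi => ?_
  rw [coeff_mul_add_of_le_orderTop (hf i hi) (hg j hj)]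
  ring

end HahnSeries

theorem QuadraticForm.baseChange_apply_eq_associated {R A M : Type*} [CommRing R] [CommRing A]
    [Algebra R A] [AddCommGroup M] [Module R M] [Invertible (2 : R)] (Q : QuadraticForm R M)
    (x : A ⊗[R] M) :
    Q.baseChange A x = LinearMap.BilinForm.baseChange A (QuadraticMap.associated Q) x x := by
  let : Invertible (2 : A) := (Invertible.map (algebraMap R A) 2).copy 2 (map_ofNat _ _).symm
  rw [← QuadraticForm.associated_baseChange, QuadraticMap.associated_eq_self_apply]

theorem QuadraticMap.Anisotropic.exists_orderTop_baseChange_eq {Γ k V : Type*} [AddCommMonoid Γ]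
    [LinearOrder Γ] [IsOrderedCancelAddMonoid Γ] [Field k] [Invertible (2 : k)] [AddCommGroup V]
    [Module k V] {q : QuadraticForm k V} (hq : q.Anisotropic) :
    ∀ x, x ≠ 0 → ∃ d : Γ, (q.baseChange (HahnSeries Γ k) x).orderTop = ↑(d + d) := by
  classical
  intro x hx
  let b := Module.Basis.ofVectorSpace k V
  obtain ⟨c, rfl⟩ := TensorProduct.eq_repr_basis_right b x
  have hc : c.support.Nonempty := Finsupp.support_nonempty_iff.mpr (by rintro rfl; simp at hx)
  obtain ⟨i₀, hi₀, hmin⟩ := c.support.exists_min_image (fun i => (c i).orderTop) hc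
  set d := (c i₀).order
  have hd : ∀ i ∈ c.support, ↑d ≤ (c i).orderTop := fun i hi =>
    (HahnSeries.order_eq_orderTop_of_ne_zero (Finsupp.mem_support_iff.mp hi₀)).trans_le
      (hmin i hi)
  set w := ∑ i ∈ c.support, (c i).coeff d • b i
  have hw : w ≠ 0 := fun hw => Finsupp.mem_support_iff.mp hi₀ <|
    HahnSeries.coeff_order_eq_zero.mp (linearIndependent_iff'.mp b.linearIndependent _ _ hw i₀ hi₀)
  rw [q.baseChange_apply_eq_associated, Finsupp.sum]
  refine ⟨d, le_antisymm (HahnSeries.orderTop_le_of_coeff_ne_zero ?_)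
    (HahnSeries.le_orderTop_baseChange_sum_tmul _ _ _ hd hd)⟩
  rw [HahnSeries.coeff_baseChange_sum_tmul _ _ _ hd hd, QuadraticMap.associated_eq_self_apply]
  exact fun h => hw (hq w h)

/-- Instance search equips `k⟦ℤ⟧` with the `k`-algebra structure `powerSeriesAlgebra`, which is
not defeq to the generic `HahnSeries.instAlgebra` used for `k⟦Γ⟧` above. -/
theorem LaurentSeries.powerSeriesAlgebra_eq_instAlgebra (k : Type*) [Field k] :
    HahnSeries.powerSeriesAlgebra ℤ k = (HahnSeries.instAlgebra : Algebra k (LaurentSeries k)) :=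
  Algebra.algebra_ext _ _ fun r => by
    simp [HahnSeries.algebraMap_apply', HahnSeries.algebraMap_apply]

theorem QuadraticMap.Anisotropic.exists_orderTop_baseChange_laurentSeries_eq {k V : Type*}
    [Field k] [Invertible (2 : k)] [AddCommGroup V] [Module k V] {q : QuadraticForm k V}
    (hq : q.Anisotropic) :
    ∀ x, x ≠ 0 → ∃ d : ℤ, (q.baseChange (LaurentSeries k) x).orderTop = ↑(d + d) :=
  LaurentSeries.powerSeriesAlgebra_eq_instAlgebra k ▸ hq.exists_orderTop_baseChange_eq

/-- Let `q` be an anisotropic quadratic form on a `k`-vector space `V`.  Over the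
Laurent series field `K = k((t))`, the quadratic form `q ⊥ ⟨t⟩` on `(K ⊗ V) × K`
(the base change of `q` plus the rank-one form `x ↦ t·x²`) is anisotropic. -/
theorem baseChange_add_t_anisotropic
    (k : Type*) [Field k] [Invertible (2 : k)]
    (V : Type*) [AddCommGroup V] [Module k V]
    (q : QuadraticForm k V) (hq : q.Anisotropic) :
    (QuadraticMap.prod
      (q.baseChange (LaurentSeries k))
      ((HahnSeries.single (1 : ℤ) (1 : k) : LaurentSeries k) •
        (QuadraticMap.sq (R := LaurentSeries k)))).Anisotropic := by
  rintro ⟨x, a⟩ h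
  rw [QuadraticMap.prod_apply, smul_apply, QuadraticMap.sq_apply, smul_eq_mul] at h
  have hqx := eq_neg_of_add_eq_zero_left h
  obtain rfl | hx := eq_or_ne x 0
  · simp_all
  obtain ⟨d, hd⟩ := hq.exists_orderTop_baseChange_laurentSeries_eq x hx
  rw [hqx, HahnSeries.orderTop_neg] at hd
  exact absurd hd (HahnSeries.orderTop_single_one_mul_mul_self_ne one_ne_zero a d)
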